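/- Every conformal derivation of CL(b,φ) is inner: if D_λ is a conformal derivation of CL(b,φ), then there exists an element g = Σ_{α∈Δ} g_α(∂)x_α of CL(b,φ) (a finite sum, g_α(∂) ∈ ℂ[∂]) such that D_λ = ad(g)_λ. In symbols, CDer(CL(b,φ)) = CInn(CL(b,φ)). -/

import Mathlib

/-!
Putting `γ = 0` and `μ = -λ-∂` in the derivation identity gives
`(bλ + φ(α)) F_{α,β}(λ,∂) = F_{α,0}(λ,-λ) c_{α,β}(λ,∂)`, where `c_{α,β}` is the structure
coefficient of `[x_α λ x_β]`. For `β = 0`, comparing two values of `∂` (the coefficient of `∂`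
in `c_{α,0}` is `α + b ≠ 0`, as `2b ∉ Δ`) shows that `F_{α,0}(λ,-λ)` vanishes at `λ = -φ(α)/b`.
Hence `F_{α,0}(λ,-λ) = (bλ + φ(α)) g_α(-λ)` for a polynomial `g_α`, and cancelling the linear
factor gives `F_{α,β} = g_α(-λ) c_{α,β}`, i.e. `D = ad g`. Only finitely many `g_α` are nonzero
because `D_λ x_0` has finitely many components.
-/

/-- Evaluation of a two-variable polynomial `P(λ,∂) ∈ ℂ[λ,∂]` at `λ = l`, `∂ = d`. -/
noncomputable def ev2 (P : MvPolynomial (Fin 2) ℂ) (l d : ℂ) : ℂ :=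
  MvPolynomial.eval ![l, d] P

/-- `B(α,β) = (1/b)(φ(α)β − φ(β)α + b(φ(α) − φ(β)))`. -/
noncomputable def Bc (b : ℂ) {Δ : AddSubgroup ℂ} (φ : Δ →+ ℂ) (α β : Δ) : ℂ :=
  (1 / b) * (φ α * (β : ℂ) - φ β * (α : ℂ) + b * (φ α - φ β))

open Polynomial

theorem Polynomial.eval_mvPolynomial_aeval {R σ : Type*} [CommSemiring R] (v : σ → R[X])
    (P : MvPolynomial σ R) (x : R) :
    (MvPolynomial.aeval v P).eval x = MvPolynomial.eval (fun i => (v i).eval x) P := by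
  rw [← coe_aeval_eq_eval, MvPolynomial.comp_aeval_apply]
  rfl

theorem Polynomial.eq_divByMonic_mul_of_forall_sub_mul_eval {R : Type*} [CommRing R] [IsDomain R]
    [Infinite R] {p h r : R[X]} {a : R} (ha : h.IsRoot a)
    (H : ∀ x, (x - a) * p.eval x = h.eval x * r.eval x) : p = h /ₘ (X - C a) * r := by
  have hpoly : (X - C a) * p = h * r := Polynomial.funext (by simpa using H)
  refine mul_left_cancel₀ (X_sub_C_ne_zero a) ?_
  rw [hpoly, ← mul_assoc, mul_divByMonic_eq_iff_isRoot.mpr ha]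

noncomputable def evalSnd (P : MvPolynomial (Fin 2) ℂ) (d : ℂ) : ℂ[X] :=
  MvPolynomial.aeval ![X, C d] P

noncomputable def antidiag (P : MvPolynomial (Fin 2) ℂ) : ℂ[X] :=
  MvPolynomial.aeval ![X, -X] P

theorem eval_evalSnd (P : MvPolynomial (Fin 2) ℂ) (d l : ℂ) :
    (evalSnd P d).eval l = ev2 P l d := by
  have hv : (fun i => (![X, C d] i).eval l) = ![l, d] := by
    ext i; fin_cases i <;> simp
  rw [evalSnd, eval_mvPolynomial_aeval, hv, ev2]

theorem eval_antidiag (P : MvPolynomial (Fin 2) ℂ) (l : ℂ) :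
    (antidiag P).eval l = ev2 P l (-l) := by
  have hv : (fun i => (![X, -X] i).eval l) = ![l, -l] := by
    ext i; fin_cases i <;> simp
  rw [antidiag, eval_mvPolynomial_aeval, hv, ev2]

section ConformalDerivation

variable {Δ : AddSubgroup ℂ} {b : ℂ} {φ : Δ →+ ℂ} {F : Δ → Δ → MvPolynomial (Fin 2) ℂ}

theorem ne_zero_of_two_mul_notMem (hb : 2 * b ∉ Δ) : b ≠ 0 := by
  rintro rfl
  exact hb (by simp [Δ.zero_mem])

theorem coe_add_ne_zero_of_two_mul_notMem (hb : 2 * b ∉ Δ) (α : Δ) : (α : ℂ) + b ≠ 0 := by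
  intro h
  have h2 : 2 * b = -((α : ℂ) + α) := by linear_combination 2 * h
  exact hb (h2 ▸ neg_mem (add_mem α.2 α.2))

theorem Bc_zero_right (hb : b ≠ 0) (α : Δ) : Bc b φ α 0 = φ α := by
  simp only [Bc, map_zero, ZeroMemClass.coe_zero]
  field_simp
  ring

theorem Bc_swap (α β : Δ) : Bc b φ β α = -Bc b φ α β := by
  simp only [Bc]
  ring

variable (b φ) in
/-- `[x_α λ x_β] = bracketCoeff b φ α β λ ∂ • x_{α+β}`. -/
noncomputable def bracketCoeff (α β : Δ) (l d : ℂ) : ℂ :=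
  ((α : ℂ) + b) * d + ((α : ℂ) + (β : ℂ) + 2 * b) * l + Bc b φ α β

variable (b φ) in
noncomputable def bracketCoeffPoly (α β : Δ) (d : ℂ) : ℂ[X] :=
  C (((α : ℂ) + b) * d + Bc b φ α β) + C ((α : ℂ) + (β : ℂ) + 2 * b) * X

theorem eval_bracketCoeffPoly (α β : Δ) (d l : ℂ) :
    (bracketCoeffPoly b φ α β d).eval l = bracketCoeff b φ α β l d := by
  simp only [bracketCoeffPoly, bracketCoeff, eval_add, eval_mul, eval_C, eval_X]
  ring

variable (b φ F) in
/-- `F α β (λ, ∂)` is the `x_{α+β}`-coefficient of `D_λ x_β`, and the identity is the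
`x_{α+β+γ}`-component of `D_λ[x_β μ x_γ] = [(D_λ x_β) λ+μ x_γ] + [x_β μ (D_λ x_γ)]`. -/
def IsConformalDerivation : Prop :=
  ∀ α β γ : Δ, ∀ l m d : ℂ,
    (((β : ℂ) + b) * (d + l) + ((β : ℂ) + (γ : ℂ) + 2 * b) * m + Bc b φ β γ)
        * ev2 (F α (β + γ)) l d
      = ev2 (F α β) l (-l - m)
          * (((α : ℂ) + (β : ℂ) + b) * d
              + ((α : ℂ) + (β : ℂ) + (γ : ℂ) + 2 * b) * (l + m)
              + Bc b φ (α + β) γ)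
        + ev2 (F α γ) l (m + d)
          * (((β : ℂ) + b) * d + ((α : ℂ) + (β : ℂ) + (γ : ℂ) + 2 * b) * m
              + Bc b φ β (α + γ))

theorem IsConformalDerivation.linear_mul_ev2 (hD : IsConformalDerivation b φ F) (hb : b ≠ 0)
    (α β : Δ) (l d : ℂ) :
    (b * l + φ α) * ev2 (F α β) l d = ev2 (F α 0) l (-l) * bracketCoeff b φ α β l d := by
  have H := hD α β 0 l (-l - d) d
  rw [show -l - (-l - d) = d by ring, show -l - d + d = -l by ring, add_zero, add_zero,
    Bc_zero_right hb, Bc_zero_right hb, Bc_swap α β, map_add] at H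
  simp only [ZeroMemClass.coe_zero] at H
  unfold bracketCoeff
  linear_combination -H

theorem IsConformalDerivation.antidiag_isRoot (hD : IsConformalDerivation b φ F)
    (hb : 2 * b ∉ Δ) (α : Δ) : (antidiag (F α 0)).IsRoot (-φ α / b) := by
  have hb0 := ne_zero_of_two_mul_notMem hb
  have hl : b * (-φ α / b) + φ α = 0 := by field_simp; ring
  have h0 := hD.linear_mul_ev2 hb0 α 0 (-φ α / b) 0
  have h1 := hD.linear_mul_ev2 hb0 α 0 (-φ α / b) 1
  rw [hl, zero_mul] at h0 h1
  have hα : ev2 (F α 0) (-φ α / b) (-(-φ α / b)) * ((α : ℂ) + b) = 0 := by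
    unfold bracketCoeff at h0 h1
    linear_combination h0 - h1
  rw [IsRoot, eval_antidiag]
  exact (mul_eq_zero.mp hα).resolve_right (coe_add_ne_zero_of_two_mul_notMem hb α)

variable (b φ F) in
/-- The polynomial `λ ↦ g_α(-λ)`, obtained by dividing `F α 0 (λ,-λ) = g_α(-λ)(bλ + φ(α))`
by its linear factor. -/
noncomputable def innerCoeff (α : Δ) : ℂ[X] :=
  (C b⁻¹ * antidiag (F α 0)) /ₘ (X - C (-φ α / b))

theorem IsConformalDerivation.ev2_eq (hD : IsConformalDerivation b φ F) (hb : 2 * b ∉ Δ)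
    (α β : Δ) (l d : ℂ) :
    ev2 (F α β) l d = (innerCoeff b φ F α).eval l * bracketCoeff b φ α β l d := by
  have hb0 := ne_zero_of_two_mul_notMem hb
  have hroot : (C b⁻¹ * antidiag (F α 0)).IsRoot (-φ α / b) := by
    simp [IsRoot, (hD.antidiag_isRoot hb α).eq_zero]
  have hpoly := eq_divByMonic_mul_of_forall_sub_mul_eval (p := evalSnd (F α β) d)
    (r := bracketCoeffPoly b φ α β d) hroot fun x => by
      rw [eval_evalSnd, eval_mul, eval_C, eval_antidiag, eval_bracketCoeffPoly]
      have H := hD.linear_mul_ev2 hb0 α β x d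
      field_simp
      linear_combination H
  rw [← eval_evalSnd, hpoly, eval_mul, eval_bracketCoeffPoly, innerCoeff]

theorem innerCoeff_eq_zero_of_eq_zero {α : Δ} (h : F α 0 = 0) : innerCoeff b φ F α = 0 := by
  simp [innerCoeff, antidiag, h]

end ConformalDerivation

theorem stmt8_general (Δ : AddSubgroup ℂ)
    (b : ℂ) (hb : 2 * b ∉ Δ) (φ : Δ →+ ℂ)
    (F : Δ → Δ → MvPolynomial (Fin 2) ℂ)
    (hfin : ∀ β : Δ, {α : Δ | F α β ≠ 0}.Finite)
    (hder : ∀ α β γ : Δ, ∀ l m d : ℂ,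
      (((β : ℂ) + b) * (d + l) + ((β : ℂ) + (γ : ℂ) + 2 * b) * m + Bc b φ β γ)
          * ev2 (F α (β + γ)) l d
        = ev2 (F α β) l (-l - m)
            * (((α : ℂ) + (β : ℂ) + b) * d
                + ((α : ℂ) + (β : ℂ) + (γ : ℂ) + 2 * b) * (l + m)
                + Bc b φ (α + β) γ)
          + ev2 (F α γ) l (m + d)
            * (((β : ℂ) + b) * d + ((α : ℂ) + (β : ℂ) + (γ : ℂ) + 2 * b) * m
                + Bc b φ β (α + γ))) :
    ∃ g : Δ → Polynomial ℂ, {α : Δ | g α ≠ 0}.Finite ∧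
      ∀ α β : Δ, ∀ l d : ℂ,
        ev2 (F α β) l d
          = (g α).eval (-l) * (((α : ℂ) + b) * d + ((α : ℂ) + (β : ℂ) + 2 * b) * l
              + Bc b φ α β) := by
  have hD : IsConformalDerivation b φ F := hder
  refine ⟨fun α => (innerCoeff b φ F α).comp (-X), (hfin 0).subset fun α hα h0 => ?_,
    fun α β l d => ?_⟩
  · exact hα (by simp [innerCoeff_eq_zero_of_eq_zero h0])
  · simpa [bracketCoeff] using hD.ev2_eq hb α β l d

/-- Every conformal derivation of `CL(b,φ)` is inner.  A conformal
derivation `D_λ` is recorded by its homogeneous components: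
`D_λ(x_β) = Σ_α F α β (λ,∂) x_{α+β}`, where for each `β` only finitely many components
are nonzero (`hfin`), and each homogeneous component satisfies the derivation identity
`D_λ[x_β μ x_γ] = [(D_λ x_β) λ+μ x_γ] + [x_β μ (D_λ x_γ)]` written on the
`x_{α+β+γ}`-component (`hder`, an identity of polynomials in `λ, μ, ∂` stated via
evaluation at all complex points).  The conclusion is that `D = ad(g)_λ` for
`g = Σ_α g_α(∂)x_α ∈ CL(b,φ)` (a finite sum), i.e.
`F α β (λ,∂) = g_α(−λ)((α+b)∂ + (α+β+2b)λ + B(α,β))`. -/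
theorem stmt8 (Δ : AddSubgroup ℂ) (hΔinf : (Δ : Set ℂ).Infinite)
    (b : ℂ) (hb : 2 * b ∉ Δ) (φ : Δ →+ ℂ)
    (F : Δ → Δ → MvPolynomial (Fin 2) ℂ)
    (hfin : ∀ β : Δ, {α : Δ | F α β ≠ 0}.Finite)
    (hder : ∀ α β γ : Δ, ∀ l m d : ℂ,
      (((β : ℂ) + b) * (d + l) + ((β : ℂ) + (γ : ℂ) + 2 * b) * m + Bc b φ β γ)
          * ev2 (F α (β + γ)) l d
        = ev2 (F α β) l (-l - m)
            * (((α : ℂ) + (β : ℂ) + b) * d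
                + ((α : ℂ) + (β : ℂ) + (γ : ℂ) + 2 * b) * (l + m)
                + Bc b φ (α + β) γ)
          + ev2 (F α γ) l (m + d)
            * (((β : ℂ) + b) * d + ((α : ℂ) + (β : ℂ) + (γ : ℂ) + 2 * b) * m
                + Bc b φ β (α + γ))) :
    ∃ g : Δ → Polynomial ℂ, {α : Δ | g α ≠ 0}.Finite ∧
      ∀ α β : Δ, ∀ l d : ℂ,
        ev2 (F α β) l d
          = (g α).eval (-l) * (((α : ℂ) + b) * d + ((α : ℂ) + (β : ℂ) + 2 * b) * l
              + Bc b φ α β) :=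
  stmt8_general Δ b hb φ F hfin hder
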